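/- arXiv:cs/0101014 — 3 statements merged into one kernel-verified Lean document; each statement's English description precedes it below -/
import Mathlib

section
/- Let R be a Horn program (a set of rules head ← body with head an atom and body a finite set of atoms) and M a set of atoms disjoint from the set of heads of rules of R. Then LM(R ∪ M) = LM(R) ∪ LM(res(R) ∪ M), where res(R) is obtained from R by deleting all rules whose head is in LM(R) and removing from remaining bodies all atoms of LM(R). -/
/-- A Horn program is a set of rules (head, body). -/
def IsModel {α : Type*} (R : Set (α × Set α)) (S : Set α) : Prop :=
  ∀ r ∈ R, r.2 ⊆ S → r.1 ∈ S

/-- The least model of a Horn program: the intersection of all its models. -/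
def LM {α : Type*} (R : Set (α × Set α)) : Set α :=
  ⋂₀ {S | IsModel R S}

/-- The set of atoms M viewed as facts {(a, ∅) : a ∈ M}. -/
def facts {α : Type*} (M : Set α) : Set (α × Set α) :=
  {r | r.1 ∈ M ∧ r.2 = ∅}

/-- The residual program: delete rules with head in LM(R), and remove LM(R)
    from the remaining bodies. -/
def res {α : Type*} (R : Set (α × Set α)) : Set (α × Set α) :=
  {q | ∃ r ∈ R, r.1 ∉ LM R ∧ q.1 = r.1 ∧ q.2 = r.2 \ LM R}

lemma isModel_LM {α : Type*} (R : Set (α × Set α)) : IsModel R (LM R) :=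
  fun r hr hb => Set.mem_sInter.2 fun S hS =>
    hS r hr (hb.trans (Set.sInter_subset_of_mem hS))

lemma LM_subset {α : Type*} {R : Set (α × Set α)} {S : Set α}
    (h : IsModel R S) : LM R ⊆ S :=
  Set.sInter_subset_of_mem h

/-- If R is a Horn program (finite bodies) and M a set of atoms disjoint from the heads
    of R, then LM(R ∪ M) = LM(R) ∪ LM(res(R) ∪ M). -/
theorem stmt_7 {α : Type*} (R : Set (α × Set α)) (M : Set α)
    (hfin : ∀ r ∈ R, r.2.Finite)
    (hdisj : ∀ r ∈ R, r.1 ∉ M) :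
    LM (R ∪ facts M) = LM R ∪ LM (res R ∪ facts M) := by
  have hA : LM R ⊆ LM (R ∪ facts M) := by
    intro x hx
    exact Set.mem_sInter.2 fun S hS =>
      Set.mem_sInter.1 hx S (fun r hr => hS r (Or.inl hr))
  apply Set.Subset.antisymm
  · -- LM(R∪M) ⊆ A ∪ B since A ∪ B is a model of R ∪ M
    apply LM_subset
    intro r hr hb
    rcases hr with hR | hM
    · by_cases hhead : r.1 ∈ LM R
      · exact Or.inl hhead
      · refine Or.inr ?_
        have hmem : (r.1, r.2 \ LM R) ∈ res R ∪ facts M :=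
          Or.inl ⟨r, hR, hhead, rfl, rfl⟩
        have hsub : (r.1, r.2 \ LM R).2 ⊆ LM (res R ∪ facts M) := by
          intro x hx
          rcases hb hx.1 with h | h
          · exact absurd h hx.2
          · exact h
        exact isModel_LM _ (r.1, r.2 \ LM R) hmem hsub
    · refine Or.inr (isModel_LM _ r (Or.inr hM) ?_)
      rw [hM.2]
      exact Set.empty_subset _
  · apply Set.union_subset hA
    -- LM(res R ∪ M) ⊆ LM(R ∪ M) since LM(R ∪ M) is a model of res R ∪ M
    apply LM_subset
    intro r hr hb
    rcases hr with hres | hM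
    · obtain ⟨q, hq, hqh, h1, h2⟩ := hres
      rw [h1]
      apply isModel_LM (R ∪ facts M) q (Or.inl hq)
      intro x hx
      by_cases hxA : x ∈ LM R
      · exact hA hxA
      · exact hb (h2 ▸ ⟨hx, hxA⟩)
    · apply isModel_LM (R ∪ facts M) r (Or.inr hM)
      rw [hM.2]
      exact Set.empty_subset _
end

section
/- Let Q be a Horn program whose rules have at most one body atom, and let v be a pf-set, i.e., for every pair of distinct atoms a, b ∈ v there is a directed path from b to a within v in the dependency graph of Q (edges tail(r) → head(r) for rules r, all intermediate vertices in v). Then either v ⊆ LM(Q) or v ∩ LM(Q) = ∅. -/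
/-- A rule of a Horn program with at most one body atom is a pair (head, tail),
    where tail = none represents the empty body (the special symbol s). -/
def IsModel1 {α : Type*} (Q : Set (α × Option α)) (S : Set α) : Prop :=
  ∀ r ∈ Q, (∀ b ∈ r.2, b ∈ S) → r.1 ∈ S

/-- The least model of such a Horn program. -/
def LM1 {α : Type*} (Q : Set (α × Option α)) : Set α :=
  ⋂₀ {S | IsModel1 Q S}

/-- Edges of the dependency graph restricted to a set v: tail(r) → head(r) with
    both endpoints in v. -/
def edgeIn {α : Type*} (Q : Set (α × Option α)) (v : Set α) (x y : α) : Prop :=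
  x ∈ v ∧ y ∈ v ∧ ∃ r ∈ Q, r.2 = some x ∧ r.1 = y

lemma lm1_model {α : Type*} (Q : Set (α × Option α)) : IsModel1 Q (LM1 Q) := by
  intro r hr hb
  intro S hS
  exact hS r hr fun b hbmem => hb b hbmem S hS

/-- If v is a pf-set (for all distinct a, b ∈ v there is a directed path from b to a
    inside v), then either v ⊆ LM(Q) or v ∩ LM(Q) = ∅. -/
theorem stmt_10 {α : Type*} (Q : Set (α × Option α)) (v : Set α)
    (hpf : ∀ a ∈ v, ∀ b ∈ v, a ≠ b → Relation.ReflTransGen (edgeIn Q v) b a) :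
    v ⊆ LM1 Q ∨ v ∩ LM1 Q = ∅ := by
  by_cases h : v ∩ LM1 Q = ∅
  · exact Or.inr h
  · left
    obtain ⟨b, hbv, hbL⟩ := Set.nonempty_iff_ne_empty.2 h
    intro a hav
    rcases eq_or_ne a b with rfl | hne
    · exact hbL
    · have hpath := hpf a hav b hbv hne
      clear hne hav
      induction hpath with
      | refl => exact hbL
      | tail _ e ih =>
        obtain ⟨_, _, r, hrQ, ht, hh⟩ := e
        have := lm1_model Q r hrQ (by intro c hc; rw [ht] at hc; cases hc; exact ih)
        rwa [hh] at this
end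

section
/- Let P be a normal logic program and define B(F) = (LM(P_{F,T}^h))ᶜ where T = GL(Fᶜ) and P_{F,T} is P with rules deleted whose head is in F, whose body contains a positive atom of F, or whose body contains not(a) with a ∈ T. Then B is monotone: F₁ ⊆ F₂ implies B(F₁) ⊆ B(F₂). -/
/-- A rule of a normal logic program: a head atom, a set of positive body atoms,
    and a set of negated body atoms. -/
structure NRule (α : Type*) where
  head : α
  pos : Set α
  neg : Set α

/-- The Gelfond–Lifschitz reduct P_M^h: keep rules whose body contains no not(a)
    with a ∈ M, and delete all negative literals. -/
def reduct {α : Type*} (P : Set (NRule α)) (M : Set α) : Set (α × Set α) :=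
  {q | ∃ r ∈ P, r.neg ∩ M = ∅ ∧ q = (r.head, r.pos)}

/-- The Gelfond–Lifschitz operator GL(M) = LM(P_M^h). -/
def GLop {α : Type*} (P : Set (NRule α)) (M : Set α) : Set α :=
  LM (reduct P M)

/-- P_{F,T}: delete rules whose head is in F, whose body has a positive atom in F,
    or whose body contains not(a) with a ∈ T. -/
def del {α : Type*} (P : Set (NRule α)) (F T : Set α) : Set (NRule α) :=
  {r ∈ P | r.head ∉ F ∧ r.pos ∩ F = ∅ ∧ r.neg ∩ T = ∅}

/-- The Horn program R^h obtained by deleting all negative literals. -/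
def horn {α : Type*} (R : Set (NRule α)) : Set (α × Set α) :=
  {q | ∃ r ∈ R, q = (r.head, r.pos)}

/-- The operator B(F) = (LM(P_{F,T}^h))ᶜ, where T = GL(Fᶜ). -/
def Bop {α : Type*} (P : Set (NRule α)) (F : Set α) : Set α :=
  (LM (horn (del P F (GLop P Fᶜ))))ᶜ


lemma LM_mono {α : Type*} {R₁ R₂ : Set (α × Set α)} (h : R₁ ⊆ R₂) : LM R₁ ⊆ LM R₂ := by
  apply Set.sInter_subset_sInter
  intro S hS r hr
  exact hS r (h hr)

lemma reduct_anti {α : Type*} (P : Set (NRule α)) {M₁ M₂ : Set α} (h : M₁ ⊆ M₂) :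
    reduct P M₂ ⊆ reduct P M₁ := by
  rintro q ⟨r, hr, hne, rfl⟩
  exact ⟨r, hr, Set.eq_empty_of_subset_empty (hne ▸ Set.inter_subset_inter_right _ h), rfl⟩

/-- The operator B is monotone. -/
theorem stmt_14 {α : Type*} [Finite α] (P : Set (NRule α)) (F₁ F₂ : Set α)
    (h : F₁ ⊆ F₂) : Bop P F₁ ⊆ Bop P F₂ := by
  have hT : GLop P F₁ᶜ ⊆ GLop P F₂ᶜ :=
    LM_mono (reduct_anti P (Set.compl_subset_compl.mpr h))
  have hdel : del P F₂ (GLop P F₂ᶜ) ⊆ del P F₁ (GLop P F₁ᶜ) := by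
    rintro r ⟨hr, hh, hp, hn⟩
    refine ⟨hr, fun hx => hh (h hx), ?_, ?_⟩
    · exact Set.eq_empty_of_subset_empty (hp ▸ Set.inter_subset_inter_right _ h)
    · exact Set.eq_empty_of_subset_empty (hn ▸ Set.inter_subset_inter_right _ hT)
  have hhorn : horn (del P F₂ (GLop P F₂ᶜ)) ⊆ horn (del P F₁ (GLop P F₁ᶜ)) := by
    rintro q ⟨r, hr, rfl⟩; exact ⟨r, hdel hr, rfl⟩
  exact Set.compl_subset_compl.mpr (LM_mono hhorn)
end
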